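/- Along the straight-line path z(t) = (1/q)(1−t) + zt with z ∈ P, z ≠ (1/q,...,1/q), the weighted inner product φ(t) = Σ_{j=1}^q g_j^r(z(t)) (z_j − 1/q) ((1/q)(1−t) + z_j t)^{r−2} is strictly increasing in t on (0,1); in particular φ(0) = 0 and φ(t) > 0 for all t ∈ (0,1]. -/

import Mathlib

/-!
Write `u(t) = c (1 - t) + z t` and `f_i(t) = (z_i - c) u_i(t)^(r-2)`; then `φ(t)` is the mean
of `f(t)` under the Gibbs weights `softmax (β u(t)^(r-1))`. The energy `β u_i^(r-1)` moves
with velocity `β (r-1) f_i`, so `φ'` is `β (r-1)` times the Gibbs variance of `f` plus the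
Gibbs mean of `f_i' = (r-2) (z_i - c)² u_i^(r-3) ≥ 0`. For `r = 2` the variance is positive
because `z` is not constant; for `r ≥ 3` the second term is positive because `z ≠ c` somewhere.
-/

open Finset Real

noncomputable def softmax {ι : Type*} [Fintype ι] (E : ι → ℝ) (i : ι) : ℝ :=
  exp (E i) / ∑ j, exp (E j)

section Softmax

variable {ι : Type*} [Fintype ι] [Nonempty ι]

lemma sum_exp_pos (E : ι → ℝ) : 0 < ∑ j, exp (E j) :=
  sum_pos (fun _ _ => exp_pos _) univ_nonempty

lemma softmax_pos (E : ι → ℝ) (i : ι) : 0 < softmax E i :=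
  div_pos (exp_pos _) (sum_exp_pos E)

lemma sum_softmax (E : ι → ℝ) : ∑ i, softmax E i = 1 := by
  simp only [softmax, ← sum_div]
  exact div_self (sum_exp_pos E).ne'

lemma sq_sum_softmax_mul_le (E f : ι → ℝ) :
    (∑ i, softmax E i * f i) ^ 2 ≤ ∑ i, softmax E i * f i ^ 2 := by
  simpa only [smul_eq_mul] using (even_two.convexOn_pow (𝕜 := ℝ)).map_sum_le
    (fun i _ => (softmax_pos E i).le) (sum_softmax E) (fun i _ => Set.mem_univ (f i))

lemma sq_sum_softmax_mul_lt {E f : ι → ℝ} {i j : ι} (hij : f i ≠ f j) :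
    (∑ k, softmax E k * f k) ^ 2 < ∑ k, softmax E k * f k ^ 2 := by
  simpa only [smul_eq_mul] using (even_two.strictConvexOn_pow two_ne_zero).map_sum_lt
    (fun k _ => softmax_pos E k) (sum_softmax E) (fun k _ => Set.mem_univ (f k))
    ⟨i, mem_univ i, j, mem_univ j, hij⟩

lemma softmax_mul_variance_add_mean_pos_of_ne {E f g : ι → ℝ} {c : ℝ} (hc : 0 < c)
    (hg : ∀ i, 0 ≤ g i) {i j : ι} (hij : f i ≠ f j) :
    0 < c * (∑ k, softmax E k * f k ^ 2 - (∑ k, softmax E k * f k) ^ 2)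
      + ∑ k, softmax E k * g k :=
  add_pos_of_pos_of_nonneg (mul_pos hc (sub_pos.2 (sq_sum_softmax_mul_lt hij)))
    (sum_nonneg fun k _ => mul_nonneg (softmax_pos E k).le (hg k))

lemma softmax_mul_variance_add_mean_pos_of_pos {E f g : ι → ℝ} {c : ℝ} (hc : 0 ≤ c)
    (hg : ∀ i, 0 ≤ g i) {i : ι} (hi : 0 < g i) :
    0 < c * (∑ k, softmax E k * f k ^ 2 - (∑ k, softmax E k * f k) ^ 2)
      + ∑ k, softmax E k * g k :=
  add_pos_of_nonneg_of_pos (mul_nonneg hc (sub_nonneg.2 (sq_sum_softmax_mul_le E f)))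
    (sum_pos' (fun k _ => mul_nonneg (softmax_pos E k).le (hg k))
      ⟨i, mem_univ i, mul_pos (softmax_pos E i) hi⟩)

lemma hasDerivAt_sum_softmax_mul {E f : ι → ℝ → ℝ} {f' : ι → ℝ} {c t : ℝ}
    (hE : ∀ i, HasDerivAt (E i) (c * f i t) t) (hf : ∀ i, HasDerivAt (f i) (f' i) t) :
    HasDerivAt (fun s => ∑ i, softmax (E · s) i * f i s)
      (c * (∑ i, softmax (E · t) i * f i t ^ 2 - (∑ i, softmax (E · t) i * f i t) ^ 2)
        + ∑ i, softmax (E · t) i * f' i) t := by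
  have hnum : HasDerivAt (fun s => ∑ i, exp (E i s) * f i s)
      (∑ i, (exp (E i t) * (c * f i t) * f i t + exp (E i t) * f' i)) t :=
    HasDerivAt.fun_sum fun i _ => (hE i).exp.mul (hf i)
  have hden : HasDerivAt (fun s => ∑ i, exp (E i s)) (∑ i, exp (E i t) * (c * f i t)) t :=
    HasDerivAt.fun_sum fun i _ => (hE i).exp
  have hS := (sum_exp_pos (E · t)).ne'
  have hmean : (fun s => ∑ i, softmax (E · s) i * f i s)
      = fun s => (∑ i, exp (E i s) * f i s) / ∑ i, exp (E i s) := by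
    funext s
    simp only [softmax, div_mul_eq_mul_div, ← sum_div]
  rw [hmean]
  refine (hnum.fun_div hden hS).congr_deriv ?_
  simp only [softmax, div_mul_eq_mul_div, ← sum_div, sum_add_distrib, mul_left_comm _ c,
    mul_assoc, ← mul_sum]
  field_simp
  ring

end Softmax

lemma hasDerivAt_segment (c z t : ℝ) : HasDerivAt (fun s => c * (1 - s) + z * s) (z - c) t :=
  (((hasDerivAt_id t).const_sub 1).const_mul c).fun_add ((hasDerivAt_id t).const_mul z)
    |>.congr_deriv (by ring)

lemma exists_ne_of_sum_eq_of_ne_const {ι : Type*} [Fintype ι] {z : ι → ℝ} {s : ℝ}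
    (hz : ∑ i, z i = s) (hne : z ≠ fun _ => s / Fintype.card ι) : ∃ i j, z i ≠ z j := by
  by_contra! h
  refine hne (funext fun i => ?_)
  have : Nonempty ι := ⟨i⟩
  have hcard : (Fintype.card ι : ℝ) ≠ 0 := Nat.cast_ne_zero.2 Fintype.card_ne_zero
  rw [← hz, sum_congr rfl fun j _ => h j i, sum_const, card_univ, nsmul_eq_mul]
  field_simp

section WeightedInner

variable {ι : Type*} [Fintype ι]

/-- The paper's `φ(t)`, for the segment `t ↦ c (1 - t) + z t` from the constant vector `c`. -/
noncomputable def weightedInner (r : ℕ) (β c : ℝ) (z : ι → ℝ) (t : ℝ) : ℝ :=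
  ∑ i, softmax (fun k => β * (c * (1 - t) + z k * t) ^ (r - 1)) i
    * ((z i - c) * (c * (1 - t) + z i * t) ^ (r - 2))

lemma weightedInner_zero {r : ℕ} {β c : ℝ} {z : ι → ℝ}
    (hz : ∑ i, z i = Fintype.card ι * c) :
    weightedInner r β c z 0 = 0 := by
  have hsum : ∑ i, (z i - c) = 0 := by
    rw [sum_sub_distrib, hz, sum_const, card_univ, nsmul_eq_mul, sub_self]
  -- at `t = 0` all energies coincide, so the weights do not depend on `i`
  simp only [weightedInner, softmax, mul_zero, sub_zero, mul_one, add_zero, ← sum_mul,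
    ← mul_sum, hsum, zero_mul, mul_zero]

theorem strictMonoOn_weightedInner {r : ℕ} (hr : 2 ≤ r) {β c : ℝ} (hβ : 0 < β) (hc : 0 < c)
    {z : ι → ℝ} (hz : ∀ i, 0 ≤ z i) {i₀ j₀ : ι} (hz₀ : z i₀ ≠ z j₀) :
    StrictMonoOn (weightedInner r β c z) (Set.Icc 0 1) := by
  have : Nonempty ι := ⟨i₀⟩
  set u : ι → ℝ → ℝ := fun i t => c * (1 - t) + z i * t
  set f : ι → ℝ → ℝ := fun i t => (z i - c) * u i t ^ (r - 2)
  have hu : ∀ i t, HasDerivAt (u i) (z i - c) t := fun i t => hasDerivAt_segment c (z i) t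
  have hE : ∀ i t,
      HasDerivAt (fun t => β * u i t ^ (r - 1)) (β * ((r - 1 : ℕ) : ℝ) * f i t) t :=
    fun i t => ((hu i t).fun_pow (r - 1)).const_mul β |>.congr_deriv <| by
      simp only [f, Nat.sub_sub]
      ring
  have hf : ∀ i t, HasDerivAt (f i) (((r - 2 : ℕ) : ℝ) * (z i - c) ^ 2 * u i t ^ (r - 3)) t :=
    fun i t => ((hu i t).fun_pow (r - 2)).const_mul (z i - c) |>.congr_deriv <| by
      simp only [Nat.sub_sub]
      ring
  have hderiv (t : ℝ) : HasDerivAt (weightedInner r β c z) _ t :=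
    hasDerivAt_sum_softmax_mul (hE · t) (hf · t)
  refine strictMonoOn_of_deriv_pos (convex_Icc 0 1)
    (fun t _ => (hderiv t).continuousAt.continuousWithinAt) fun t ht => ?_
  rw [interior_Icc] at ht
  rw [(hderiv t).deriv]
  have hu_pos : ∀ i, 0 < u i t := fun i => by
    have := hz i
    simp only [u]
    nlinarith [ht.1, ht.2]
  have hg : ∀ i, 0 ≤ ((r - 2 : ℕ) : ℝ) * (z i - c) ^ 2 * u i t ^ (r - 3) := fun i => by
    have := hu_pos i
    positivity
  have hβr : 0 < β * ((r - 1 : ℕ) : ℝ) := mul_pos hβ (Nat.cast_pos.2 (by omega))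
  rcases hr.eq_or_lt with rfl | hr3
  · have hf₀ : f i₀ t ≠ f j₀ t := by simpa [f] using hz₀
    exact softmax_mul_variance_add_mean_pos_of_ne hβr hg hf₀
  · obtain ⟨i, hi⟩ : ∃ i, z i ≠ c := by
      by_contra! h
      exact hz₀ ((h i₀).trans (h j₀).symm)
    have hr2 : (0 : ℝ) < ((r - 2 : ℕ) : ℝ) := Nat.cast_pos.2 (by omega)
    exact softmax_mul_variance_add_mean_pos_of_pos hβr.le hg
      (mul_pos (mul_pos hr2 (pow_two_pos_of_ne_zero (sub_ne_zero.2 hi))) (pow_pos (hu_pos i) _))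

end WeightedInner

theorem gcwp_weighted_inner_product_increasing_general
    (q r : ℕ) (hr : 2 ≤ r) (β : ℝ) (hβ : 0 < β)
    (z : Fin q → ℝ) (hz : (∀ k, 0 ≤ z k) ∧ ∑ k, z k = 1)
    (hzne : z ≠ fun _ => 1 / (q : ℝ)) :
    let zp : ℝ → Fin q → ℝ := fun t k => (1 / q) * (1 - t) + z k * t
    let g : (Fin q → ℝ) → (Fin q → ℝ) := fun w k =>
      Real.exp (β * w k ^ (r - 1)) / ∑ j, Real.exp (β * w j ^ (r - 1))
    let φ : ℝ → ℝ := fun t => ∑ j, g (zp t) j * (z j - 1 / q) * (zp t j ^ (r - 2))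
    StrictMonoOn φ (Set.Ioo (0 : ℝ) 1) ∧ φ 0 = 0 ∧
      ∀ t ∈ Set.Ioc (0 : ℝ) 1, 0 < φ t := by
  intro zp g φ
  obtain ⟨hz_nonneg, hz_sum⟩ := hz
  obtain ⟨i, j, hij⟩ := exists_ne_of_sum_eq_of_ne_const hz_sum (by simpa using hzne)
  have hq : (0 : ℝ) < q := Nat.cast_pos.2 i.pos
  have hφ : φ = weightedInner r β (1 / q) z :=
    funext fun _ => sum_congr rfl fun _ _ => mul_assoc ..
  have hmono := strictMonoOn_weightedInner hr hβ (one_div_pos.2 hq) hz_nonneg hij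
  have hzero : weightedInner r β (1 / q) z 0 = 0 :=
    weightedInner_zero (by rw [hz_sum, Fintype.card_fin]; field_simp)
  rw [hφ]
  refine ⟨hmono.mono Set.Ioo_subset_Icc_self, hzero, fun t ht => ?_⟩
  exact hzero ▸ hmono (Set.left_mem_Icc.2 zero_le_one) ⟨ht.1.le, ht.2⟩ ht.1

/-- Along the straight-line path `z(t) = (1/q)(1−t) + zt` with `z` in
the simplex, `z ≠ z_β`, the weighted inner product
`φ(t) = ∑_j g_j^r(z(t)) (z_j − 1/q) z(t)_j^{r−2}` is strictly increasing on (0,1);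
moreover `φ(0) = 0` and `φ(t) > 0` for `t ∈ (0,1]`. -/
theorem gcwp_weighted_inner_product_increasing
    (q r : ℕ) (hq : 2 ≤ q) (hr : 2 ≤ r) (β : ℝ) (hβ : 0 < β)
    (z : Fin q → ℝ) (hz : (∀ k, 0 ≤ z k) ∧ ∑ k, z k = 1)
    (hzne : z ≠ fun _ => 1 / (q : ℝ)) :
    let zp : ℝ → Fin q → ℝ := fun t k => (1 / q) * (1 - t) + z k * t
    let g : (Fin q → ℝ) → (Fin q → ℝ) := fun w k =>
      Real.exp (β * w k ^ (r - 1)) / ∑ j, Real.exp (β * w j ^ (r - 1))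
    let φ : ℝ → ℝ := fun t => ∑ j, g (zp t) j * (z j - 1 / q) * (zp t j ^ (r - 2))
    StrictMonoOn φ (Set.Ioo (0 : ℝ) 1) ∧ φ 0 = 0 ∧
      ∀ t ∈ Set.Ioc (0 : ℝ) 1, 0 < φ t :=
  gcwp_weighted_inner_product_increasing_general q r hr β hβ z hz hzne
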